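/- Let E be a real inner product space, let λ be a real number with 0 < λ < 1, let t ≥ 1 be a natural number, let x : ℕ → E and y : ℕ → ℝ with y(s) = 1 or y(s) = −1 for all s, and let X ≥ 0 be a real number with ‖x(s)‖² ≤ X for all 1 ≤ s ≤ t. Let w : ℕ → E satisfy w(1) = 0 and, for all 1 ≤ s ≤ t, w(s+1) = (1 − 1/s)·w(s) + (1/(λs))·(y(s)·x(s)), and assume every sample is badly classified: y(s)·⟪w(s), x(s)⟫ < 1 for all 1 ≤ s ≤ t. Then ‖w(t+1)‖² ≤ (2·(logb 2 t + 1) + 2·X)/λ², where logb 2 denotes the base-2 logarithm. -/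

import Mathlib

/-!
The squared norm of the iterates never exceeds `(2 + X) / λ²`, which is at most the claimed bound.
Indeed, expanding `‖(1 - 1/s) • w + (1/(λ s)) • v‖²` and using `⟪w, v⟫ ≤ 1` (the sample is badly
classified) and `‖v‖² ≤ X`, each update maps the ball of that squared radius into itself.
-/

open RealInnerProductSpace

section Pegasos

variable {E : Type*} [NormedAddCommGroup E] [InnerProductSpace ℝ E]

theorem norm_smul_add_smul_sq_le {a b C X : ℝ} (ha : 0 ≤ a) (hb : 0 ≤ b) {w v : E}
    (hw : ‖w‖ ^ 2 ≤ C) (hwv : ⟪w, v⟫ ≤ 1) (hv : ‖v‖ ^ 2 ≤ X) :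
    ‖a • w + b • v‖ ^ 2 ≤ a ^ 2 * C + 2 * a * b + b ^ 2 * X := by
  have hexpand :
      ‖a • w + b • v‖ ^ 2 = a ^ 2 * ‖w‖ ^ 2 + 2 * a * b * ⟪w, v⟫ + b ^ 2 * ‖v‖ ^ 2 := by
    rw [norm_add_sq_real, norm_smul, norm_smul, real_inner_smul_left, real_inner_smul_right,
      Real.norm_of_nonneg ha, Real.norm_of_nonneg hb]
    ring
  have hw' := mul_le_mul_of_nonneg_left hw (sq_nonneg a)
  have hwv' := mul_le_mul_of_nonneg_left hwv (by positivity : 0 ≤ 2 * a * b)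
  have hv' := mul_le_mul_of_nonneg_left hv (sq_nonneg b)
  linarith

theorem pegasos_radius_step_le {lam X s : ℝ} (hlam0 : 0 < lam) (hlam1 : lam ≤ 1) (hX : 0 ≤ X)
    (hs : 1 ≤ s) :
    (1 - 1 / s) ^ 2 * ((2 + X) / lam ^ 2) + 2 * (1 - 1 / s) * (1 / (lam * s))
      + (1 / (lam * s)) ^ 2 * X ≤ (2 + X) / lam ^ 2 := by
  have hs0 : 0 < s := by linarith
  have hs1 : 0 ≤ s - 1 := by linarith
  have hlam1' : 0 ≤ 1 - lam := by linarith
  have hgap : (2 + X) / lam ^ 2 - ((1 - 1 / s) ^ 2 * ((2 + X) / lam ^ 2)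
        + 2 * (1 - 1 / s) * (1 / (lam * s)) + (1 / (lam * s)) ^ 2 * X)
      = (2 * X * (s - 1) + 2 * (1 - lam) * (s - 1) + 2 * s) / (lam ^ 2 * s ^ 2) := by
    field_simp
    ring
  rw [← sub_nonneg, hgap]
  positivity

theorem pegasos_norm_sq_le {lam X : ℝ} (hlam0 : 0 < lam) (hlam1 : lam ≤ 1) (hX : 0 ≤ X)
    {t : ℕ} {v w : ℕ → E} (hw1 : w 1 = 0) (hv : ∀ s, 1 ≤ s → s ≤ t → ‖v s‖ ^ 2 ≤ X)
    (hupdate : ∀ s : ℕ, 1 ≤ s → s ≤ t →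
      w (s + 1) = (1 - 1 / (s : ℝ)) • w s + (1 / (lam * s)) • v s)
    (hbad : ∀ s : ℕ, 1 ≤ s → s ≤ t → ⟪w s, v s⟫ ≤ 1) :
    ∀ s, 1 ≤ s → s ≤ t + 1 → ‖w s‖ ^ 2 ≤ (2 + X) / lam ^ 2 := by
  intro s hs
  induction s, hs using Nat.le_induction with
  | base =>
    intro _
    rw [hw1, norm_zero, zero_pow two_ne_zero]
    positivity
  | succ n hn ih =>
    intro hnt
    have hnt : n ≤ t := by omega
    have hs : (1 : ℝ) ≤ n := by exact_mod_cast hn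
    have hdecay : 0 ≤ 1 - 1 / (n : ℝ) := sub_nonneg.mpr (div_le_one_of_le₀ hs (by positivity))
    rw [hupdate n hn hnt]
    exact (norm_smul_add_smul_sq_le hdecay (by positivity) (ih (by omega)) (hbad n hn hnt)
      (hv n hn hnt)).trans (pegasos_radius_step_le hlam0 hlam1 hX hs)

end Pegasos

theorem p2pegasos_upper_bound_general {E : Type*} [NormedAddCommGroup E] [InnerProductSpace ℝ E]
    (lam : ℝ) (hlam0 : 0 < lam) (hlam1 : lam < 1)
    (t : ℕ)
    (x : ℕ → E) (y : ℕ → ℝ) (hy : ∀ s, y s = 1 ∨ y s = -1)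
    (X : ℝ) (hX : 0 ≤ X) (hxbound : ∀ s, 1 ≤ s → s ≤ t → ‖x s‖^2 ≤ X)
    (w : ℕ → E) (hw1 : w 1 = 0)
    (hupdate : ∀ s : ℕ, 1 ≤ s → s ≤ t →
      w (s + 1) = (1 - 1/(s : ℝ)) • w s + (1/(lam * s)) • (y s • x s))
    (hbad : ∀ s : ℕ, 1 ≤ s → s ≤ t → y s * ⟪w s, x s⟫ < 1) :
    ‖w (t + 1)‖^2 ≤ (2 * (Real.logb 2 t + 1) + 2 * X)/lam^2 := by
  have hnorm : ∀ s, ‖y s • x s‖ = ‖x s‖ := fun s => by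
    rcases hy s with h | h <;> simp [h]
  have hradius := pegasos_norm_sq_le hlam0 hlam1.le hX hw1
    (fun s h₁ h₂ => (hnorm s).symm ▸ hxbound s h₁ h₂) hupdate
    (fun s h₁ h₂ => by rw [real_inner_smul_right]; exact (hbad s h₁ h₂).le)
    (t + 1) (by omega) le_rfl
  have hlog : 0 ≤ Real.logb 2 t :=
    div_nonneg (Real.log_natCast_nonneg t) (Real.log_nonneg one_le_two)
  exact hradius.trans (div_le_div_of_nonneg_right (by linarith) (sq_nonneg lam))

theorem p2pegasos_upper_bound {E : Type*} [NormedAddCommGroup E] [InnerProductSpace ℝ E]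
    (lam : ℝ) (hlam0 : 0 < lam) (hlam1 : lam < 1)
    (t : ℕ) (ht : 1 ≤ t)
    (x : ℕ → E) (y : ℕ → ℝ) (hy : ∀ s, y s = 1 ∨ y s = -1)
    (X : ℝ) (hX : 0 ≤ X) (hxbound : ∀ s, 1 ≤ s → s ≤ t → ‖x s‖^2 ≤ X)
    (w : ℕ → E) (hw1 : w 1 = 0)
    (hupdate : ∀ s : ℕ, 1 ≤ s → s ≤ t →
      w (s + 1) = (1 - 1/(s : ℝ)) • w s + (1/(lam * s)) • (y s • x s))
    (hbad : ∀ s : ℕ, 1 ≤ s → s ≤ t → y s * ⟪w s, x s⟫ < 1) :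
    ‖w (t + 1)‖^2 ≤ (2 * (Real.logb 2 t + 1) + 2 * X)/lam^2 :=
  p2pegasos_upper_bound_general lam hlam0 hlam1 t x y hy X hX hxbound w hw1 hupdate hbad
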